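/- Branching ratio identities: let μ = (μ_1 > ⋯ > μ_m > 0) be a strict partition of n−1. (i) If 1 ≤ k ≤ m and the sequence λ obtained from μ by replacing μ_k with μ_k + 1 is again a strict partition (of n), then (μ_k + 1) · ∏_{a=1, a≠k}^{m} (μ_k(μ_k+1) − μ_a(μ_a+1))/(μ_k(μ_k+1) − μ_a(μ_a−1)) = n g_μ / g_λ. (ii) If μ_m ≥ 2 and λ = (μ_1,…,μ_m,1), then ∏_{a=1}^{m} (μ_a + 1)/(μ_a − 1) = n g_μ / g_λ. -/

import Mathlib

/-!
Write `g_λ = |λ|! / ∏ λ_i! · S(λ)` with Schur's product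
`S(λ) = ∏_{i<j} (λ_i - λ_j)/(λ_i + λ_j)`. Since `|λ| = |μ| + 1 = n`, the quotient `n g_μ / g_λ`
is `∏ λ_i! / ∏ μ_i!` times `S(μ)/S(λ)`. Raising `μ_k` by one multiplies `∏ λ_i!` by `μ_k + 1`
and changes only the factors of `S` involving the index `k`: the pair `{k, a}` contributes
`(μ_k(μ_k+1) - μ_a(μ_a+1))/(μ_k(μ_k+1) - μ_a(μ_a-1))` to `S(μ)/S(λ)`. Appending a part `1`
leaves `∏ λ_i!` unchanged and multiplies `S` by `∏_a (μ_a - 1)/(μ_a + 1)`.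
-/

noncomputable section

/-- The number `g_λ` of standard shifted `λ`-tableaux, by the Schur formula
`g_λ = n!/(λ_1!⋯λ_ℓ!) ∏_{i<j} (λ_i-λ_j)/(λ_i+λ_j)` (as a rational number). -/
def gQ (lam : List ℕ) : ℚ :=
  (Nat.factorial lam.sum : ℚ) / (((lam.map Nat.factorial).prod : ℕ) : ℚ) *
    ∏ i ∈ Finset.range lam.length, ∏ j ∈ Finset.range lam.length,
      if i < j then
        ((lam.getD i 0 : ℚ) - (lam.getD j 0 : ℚ)) / ((lam.getD i 0 : ℚ) + (lam.getD j 0 : ℚ))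
      else 1

open Finset Function

@[to_additive]
theorem List.getElem_mul_prod_set {M : Type*} [CommMonoid M] (L : List M) {k : ℕ}
    (hk : k < L.length) (a : M) : L[k] * (L.set k a).prod = a * L.prod := by
  rw [List.prod_set, if_pos hk, ← List.prod_take_mul_prod_drop L (k + 1),
    List.prod_take_succ L k hk]
  ac_rfl

theorem List.Nodup.injOn_getD {α : Type*} {l : List α} (h : l.Nodup) (d : α) :
    Set.InjOn (fun j => l.getD j d) (Set.Iio l.length) := by
  intro i hi j hj hij
  simp only [Set.mem_Iio] at hi hj
  simp only [List.getD_eq_getElem _ _ hi, List.getD_eq_getElem _ _ hj] at hij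
  exact h.getElem_inj_iff.1 hij

theorem List.getD_set_eq_update {α : Type*} (l : List α) {i : ℕ} (hi : i < l.length) (a d : α) :
    (fun j => (l.set i a).getD j d) = update (fun j => l.getD j d) i a := by
  funext j
  by_cases h : j = i
  · subst h; simp [List.getD_eq_getElem?_getD, hi]
  · simp [h, List.getD_eq_getElem?_getD, Ne.symm h]

theorem List.prod_map_factorial_set_succ (l : List ℕ) {i : ℕ} (hi : i < l.length) :
    ((l.set i (l.getD i 0 + 1)).map Nat.factorial).prod
      = (l.getD i 0 + 1) * (l.map Nat.factorial).prod := by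
  have h := (l.map Nat.factorial).getElem_mul_prod_set (k := i) (by simpa using hi)
    (l.getD i 0 + 1).factorial
  rw [← List.map_set, List.getElem_map, Nat.factorial_succ, ← List.getD_eq_getElem l 0 hi,
    mul_assoc, mul_left_comm] at h
  exact Nat.eq_of_mul_eq_mul_left (Nat.factorial_pos _) h

namespace ShiftedTableaux

def schurFactor (f : ℕ → ℚ) (i j : ℕ) : ℚ := if i < j then (f i - f j) / (f i + f j) else 1

def schurProd (m : ℕ) (f : ℕ → ℚ) : ℚ := ∏ i ∈ range m, ∏ j ∈ range m, schurFactor f i j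

def branchingFactor (x y : ℚ) : ℚ := (x * (x + 1) - y * (y + 1)) / (x * (x + 1) - y * (y - 1))

theorem gQ_eq (lam : List ℕ) :
    gQ lam = (lam.sum.factorial : ℚ) / ((lam.map Nat.factorial).prod : ℕ)
      * schurProd lam.length (fun i => lam.getD i 0) := rfl

theorem schurProd_congr {m : ℕ} {f g : ℕ → ℚ} (h : ∀ i < m, f i = g i) :
    schurProd m f = schurProd m g :=
  prod_congr rfl fun i hi => prod_congr rfl fun j hj => by
    simp only [schurFactor, h i (mem_range.1 hi), h j (mem_range.1 hj)]

theorem schurProd_ne_zero {m : ℕ} {f : ℕ → ℚ} (hf0 : ∀ i, 0 ≤ f i)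
    (hf : Set.InjOn f (Set.Iio m)) : schurProd m f ≠ 0 := by
  refine prod_ne_zero_iff.2 fun i hi => prod_ne_zero_iff.2 fun j hj => ?_
  unfold schurFactor
  split_ifs with hij
  · have hne : f i ≠ f j := fun h => hij.ne (hf (by simpa using hi) (by simpa using hj) h)
    have hsum : f i + f j ≠ 0 := fun h => hne (by linarith [hf0 i, hf0 j])
    exact div_ne_zero (sub_ne_zero.2 hne) hsum
  · exact one_ne_zero

theorem schurProd_succ (m : ℕ) (f : ℕ → ℚ) :
    schurProd (m + 1) f = schurProd m f * ∏ i ∈ range m, schurFactor f i m := by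
  have hlast : ∏ j ∈ range (m + 1), schurFactor f m j = 1 :=
    prod_eq_one fun j hj => if_neg (by simp at hj; omega)
  rw [schurProd, schurProd, prod_range_succ, hlast, mul_one, ← prod_mul_distrib]
  exact prod_congr rfl fun i _ => prod_range_succ _ _

theorem schurProd_succ_of_eq_one {m : ℕ} {f : ℕ → ℚ} (hf : f m = 1) :
    schurProd (m + 1) f = schurProd m f * ∏ i ∈ range m, (f i - 1) / (f i + 1) := by
  rw [schurProd_succ]
  congr 1
  exact prod_congr rfl fun i hi => by rw [schurFactor, if_pos (mem_range.1 hi), hf]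

theorem schurProd_eq_cross_mul_prod_ne {m k : ℕ} (hk : k < m) (f : ℕ → ℚ) :
    schurProd m f = (∏ a ∈ range m, schurFactor f k a * schurFactor f a k) *
      ∏ i ∈ range m, ∏ j ∈ range m, if i = k ∨ j = k then 1 else schurFactor f i j := by
  have hkk : schurFactor f k k = 1 := if_neg (lt_irrefl k)
  have hrow : ∀ i, ∏ j ∈ range m, (if i = k ∨ j = k then schurFactor f i j else 1)
      = (if i = k then ∏ j ∈ range m, schurFactor f k j else 1) * schurFactor f i k := by
    intro i
    by_cases hi : i = k
    · subst hi; simp [hkk]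
    · simp [hi, prod_ite_eq', hk]
  have hcross : ∏ i ∈ range m, ∏ j ∈ range m, (if i = k ∨ j = k then schurFactor f i j else 1)
      = (∏ a ∈ range m, schurFactor f k a) * ∏ a ∈ range m, schurFactor f a k := by
    simp_rw [hrow, prod_mul_distrib, prod_ite_eq', if_pos (mem_range.2 hk)]
  rw [prod_mul_distrib, ← hcross, schurProd, ← prod_mul_distrib]
  refine prod_congr rfl fun i _ => ?_
  rw [← prod_mul_distrib]
  exact prod_congr rfl fun j _ => by split_ifs <;> simp

/-- The identity behind the branching rule: `x(x+1) - y(y+1) = (x-y)(x+y+1)` and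
`x(x+1) - y(y-1) = (x+y)(x-y+1)`. -/
theorem branchingFactor_mul {x y : ℚ} (h₁ : x + y ≠ 0) (h₂ : x + 1 + y ≠ 0)
    (h₃ : x - y + 1 ≠ 0) :
    branchingFactor x y * ((x + 1 - y) / (x + 1 + y)) = (x - y) / (x + y) := by
  have hden : x * (x + 1) - y * (y - 1) ≠ 0 := by
    rw [show x * (x + 1) - y * (y - 1) = (x + y) * (x - y + 1) by ring]
    exact mul_ne_zero h₁ h₃
  rw [branchingFactor]
  field_simp
  ring

theorem schurProd_eq_mul_schurProd_update {m k : ℕ} (hk : k < m) {f : ℕ → ℚ}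
    (hf0 : ∀ i, 0 ≤ f i) (hf : Set.InjOn f (Set.Iio m))
    (hg : Set.InjOn (update f k (f k + 1)) (Set.Iio m)) :
    schurProd m f = (∏ a ∈ range m, if a = k then 1 else branchingFactor (f k) (f a)) *
      schurProd m (update f k (f k + 1)) := by
  set g := update f k (f k + 1)
  have hgk : g k = f k + 1 := update_self ..
  have hga : ∀ a, a ≠ k → g a = f a := fun a ha => update_of_ne ha ..
  have hcross : ∀ a ∈ range m,
      (if a = k then 1 else branchingFactor (f k) (f a)) * (schurFactor g k a * schurFactor g a k)
        = schurFactor f k a * schurFactor f a k := by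
    intro a ha
    by_cases hak : a = k
    · subst hak; simp [schurFactor]
    have ha' : a ∈ Set.Iio m := by simpa using ha
    have hk' : k ∈ Set.Iio m := by simpa using hk
    have hne : f a ≠ f k := fun h => hak (hf ha' hk' h)
    have hne' : f a ≠ f k + 1 := fun h => hak (hg ha' hk' (by rw [hga a hak, hgk, h]))
    have h₁ : f k + f a ≠ 0 := fun h => hne (by linarith [hf0 a, hf0 k])
    have h₂ : f k + 1 + f a ≠ 0 := by linarith [hf0 a, hf0 k]
    have h₃ : f k - f a + 1 ≠ 0 := fun h => hne' (by linarith)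
    have key := branchingFactor_mul h₁ h₂ h₃
    rcases lt_or_gt_of_ne hak with hlt | hgt
    · simp only [schurFactor, if_neg hak, if_pos hlt, if_neg (lt_asymm hlt), hgk, hga a hak]
      linear_combination (-1 : ℚ) * key
    · simp only [schurFactor, if_neg hak, if_pos hgt, if_neg (lt_asymm hgt), hgk, hga a hak]
      linear_combination key
  have hrest : ∀ i j, (if i = k ∨ j = k then 1 else schurFactor g i j)
      = if i = k ∨ j = k then 1 else schurFactor f i j := by
    intro i j
    split_ifs with h
    · rfl
    · rw [not_or] at h
      simp only [schurFactor, hga i h.1, hga j h.2]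
  rw [schurProd_eq_cross_mul_prod_ne hk f, schurProd_eq_cross_mul_prod_ne hk g, ← mul_assoc,
    ← prod_congr rfl hcross, prod_mul_distrib]
  simp only [hrest]

theorem succ_mul_gQ_div_gQ {mu lam : List ℕ} (hsum : lam.sum = mu.sum + 1) :
    ((mu.sum : ℚ) + 1) * gQ mu / gQ lam
      = ((lam.map Nat.factorial).prod : ℕ) / ((mu.map Nat.factorial).prod : ℕ) *
        (schurProd mu.length (fun i => mu.getD i 0) /
          schurProd lam.length (fun i => lam.getD i 0)) := by
  have hn : (mu.sum : ℚ) + 1 ≠ 0 := by positivity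
  have hA : (mu.sum.factorial : ℚ) ≠ 0 := by positivity
  rw [gQ_eq, gQ_eq, hsum, Nat.factorial_succ, Nat.cast_mul, Nat.cast_succ]
  field_simp

theorem schurProd_getD_ne_zero {l : List ℕ} (h : l.Nodup) :
    schurProd l.length (fun i => l.getD i 0) ≠ 0 :=
  schurProd_ne_zero (fun _ => Nat.cast_nonneg _) (Nat.cast_injective.comp_injOn (h.injOn_getD 0))

theorem cast_prod_map_factorial_ne_zero (l : List ℕ) :
    (((l.map Nat.factorial).prod : ℕ) : ℚ) ≠ 0 := by
  exact_mod_cast (List.prod_pos (by simp [Nat.factorial_pos])).ne'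

theorem succ_mul_gQ_div_gQ_set {mu : List ℕ} (hs : mu.Pairwise (· > ·)) {i : ℕ}
    (hi : i < mu.length) (hsl : (mu.set i (mu.getD i 0 + 1)).Pairwise (· > ·)) :
    ((mu.sum : ℚ) + 1) * gQ mu / gQ (mu.set i (mu.getD i 0 + 1))
      = ((mu.getD i 0 : ℚ) + 1) * ∏ a ∈ range mu.length,
          if a = i then 1 else branchingFactor (mu.getD i 0) (mu.getD a 0) := by
  set f : ℕ → ℚ := fun j => mu.getD j 0
  have hsum : (mu.set i (mu.getD i 0 + 1)).sum = mu.sum + 1 := by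
    have := mu.getElem_add_sum_set hi (mu.getD i 0 + 1)
    rw [← List.getD_eq_getElem mu 0 hi] at this
    omega
  have hupd : (fun j => ((mu.set i (mu.getD i 0 + 1)).getD j 0 : ℚ)) = update f i (f i + 1) := by
    rw [← Nat.cast_succ]
    exact (congrArg (Nat.cast ∘ ·) (mu.getD_set_eq_update hi _ 0)).trans (comp_update _ _ _ _)
  have hg : Set.InjOn (update f i (f i + 1)) (Set.Iio mu.length) := by
    rw [← hupd, ← List.length_set (i := i) (a := mu.getD i 0 + 1)]
    exact Nat.cast_injective.comp_injOn (hsl.nodup.injOn_getD 0)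
  have hSlam := schurProd_getD_ne_zero hsl.nodup
  rw [List.length_set, hupd] at hSlam
  rw [succ_mul_gQ_div_gQ hsum, mu.prod_map_factorial_set_succ hi, List.length_set, hupd,
    schurProd_eq_mul_schurProd_update hi (fun _ => Nat.cast_nonneg _)
      (Nat.cast_injective.comp_injOn (hs.nodup.injOn_getD 0)) hg,
    Nat.cast_mul, Nat.cast_succ, mul_div_cancel_right₀ _ (cast_prod_map_factorial_ne_zero mu),
    mul_div_cancel_right₀ _ hSlam]

theorem succ_mul_gQ_div_gQ_append_one {mu : List ℕ} (hs : mu.Pairwise (· > ·)) :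
    ((mu.sum : ℚ) + 1) * gQ mu / gQ (mu ++ [1])
      = ∏ a ∈ range mu.length, ((mu.getD a 0 : ℚ) + 1) / ((mu.getD a 0 : ℚ) - 1) := by
  set f : ℕ → ℚ := fun j => mu.getD j 0
  have happend : ∀ j < mu.length, ((mu ++ [1]).getD j 0 : ℚ) = f j :=
    fun j hj => congrArg Nat.cast (List.getD_append _ _ _ _ hj)
  have hlam : schurProd (mu.length + 1) (fun j => ((mu ++ [1]).getD j 0 : ℚ))
      = schurProd mu.length f * ∏ a ∈ range mu.length, (f a - 1) / (f a + 1) := by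
    rw [schurProd_succ_of_eq_one (by simp), schurProd_congr happend]
    exact congrArg _ (prod_congr rfl fun a ha => by rw [happend a (mem_range.1 ha)])
  rw [succ_mul_gQ_div_gQ (by simp), List.map_append, List.prod_append, List.length_append]
  simp only [List.map_cons, List.map_nil, List.prod_singleton, Nat.factorial_one, mul_one,
    List.length_singleton]
  rw [div_self (cast_prod_map_factorial_ne_zero mu), one_mul, hlam,
    div_mul_cancel_left₀ (schurProd_getD_ne_zero hs.nodup), ← prod_inv_distrib]
  exact prod_congr rfl fun _ _ => inv_div _ _

end ShiftedTableaux

open ShiftedTableaux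

theorem statement19_general (mu : List ℕ) (hs : mu.Pairwise (· > ·)) :
    (∀ k : ℕ, 1 ≤ k → k ≤ mu.length →
      ((mu.set (k - 1) (mu.getD (k - 1) 0 + 1)).Pairwise (· > ·)) →
      ((mu.getD (k - 1) 0 : ℚ) + 1) *
        ∏ a ∈ Finset.range mu.length,
          (if a = k - 1 then 1 else
            ((mu.getD (k - 1) 0 : ℚ) * ((mu.getD (k - 1) 0 : ℚ) + 1)
                - (mu.getD a 0 : ℚ) * ((mu.getD a 0 : ℚ) + 1)) /
              ((mu.getD (k - 1) 0 : ℚ) * ((mu.getD (k - 1) 0 : ℚ) + 1)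
                - (mu.getD a 0 : ℚ) * ((mu.getD a 0 : ℚ) - 1)))
        = ((mu.sum : ℚ) + 1) * gQ mu / gQ (mu.set (k - 1) (mu.getD (k - 1) 0 + 1))) ∧
    (2 ≤ mu.getD (mu.length - 1) 0 →
      (∏ a ∈ Finset.range mu.length, ((mu.getD a 0 : ℚ) + 1) / ((mu.getD a 0 : ℚ) - 1))
        = ((mu.sum : ℚ) + 1) * gQ mu / gQ (mu ++ [1])) := by
  refine ⟨fun k hk1 hkm hsl => ?_, fun _ => (succ_mul_gQ_div_gQ_append_one hs).symm⟩
  obtain ⟨i, rfl⟩ : ∃ i, k = i + 1 := ⟨k - 1, by omega⟩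
  simp only [Nat.add_sub_cancel] at hsl ⊢
  exact (succ_mul_gQ_div_gQ_set hs (by omega) hsl).symm

/-- Branching ratio identities, for a strict partition `μ = (μ_1 > ⋯ > μ_m > 0)` of
`n - 1` (so `n = μ_1 + ⋯ + μ_m + 1`):
(i) if replacing `μ_k` by `μ_k + 1` yields a strict partition `λ` of `n`, then
`(μ_k + 1) ∏_{a≠k} (μ_k(μ_k+1) - μ_a(μ_a+1))/(μ_k(μ_k+1) - μ_a(μ_a-1)) = n g_μ / g_λ`;
(ii) if `μ_m ≥ 2` and `λ = (μ_1, …, μ_m, 1)`, then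
`∏_a (μ_a+1)/(μ_a-1) = n g_μ / g_λ`. -/
theorem statement19 (mu : List ℕ) (hs : mu.Pairwise (· > ·)) (hp : ∀ p ∈ mu, 0 < p)
    (hm : 1 ≤ mu.length) :
    (∀ k : ℕ, 1 ≤ k → k ≤ mu.length →
      ((mu.set (k - 1) (mu.getD (k - 1) 0 + 1)).Pairwise (· > ·)) →
      ((mu.getD (k - 1) 0 : ℚ) + 1) *
        ∏ a ∈ Finset.range mu.length,
          (if a = k - 1 then 1 else
            ((mu.getD (k - 1) 0 : ℚ) * ((mu.getD (k - 1) 0 : ℚ) + 1)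
                - (mu.getD a 0 : ℚ) * ((mu.getD a 0 : ℚ) + 1)) /
              ((mu.getD (k - 1) 0 : ℚ) * ((mu.getD (k - 1) 0 : ℚ) + 1)
                - (mu.getD a 0 : ℚ) * ((mu.getD a 0 : ℚ) - 1)))
        = ((mu.sum : ℚ) + 1) * gQ mu / gQ (mu.set (k - 1) (mu.getD (k - 1) 0 + 1))) ∧
    (2 ≤ mu.getD (mu.length - 1) 0 →
      (∏ a ∈ Finset.range mu.length, ((mu.getD a 0 : ℚ) + 1) / ((mu.getD a 0 : ℚ) - 1))
        = ((mu.sum : ℚ) + 1) * gQ mu / gQ (mu ++ [1])) :=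
  statement19_general mu hs
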